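/- arXiv:1502.03759 — 6 statements merged into one kernel-verified Lean document; each statement's English description precedes it below -/
import Mathlib

section
/- Let M be a rank 3 simple matroid in which some element e is contained in exactly two flats, of cardinalities a+1 and b+1 respectively. Then all other flats of M are 2-element flats consisting of one element from each of these two flats (minus e). Consequently M has n = a + b + 1 elements, ℓ = ab + 2 flats, and m = 2ab + a + b + 2 complete flags. -/
/-- If in a rank 3 simple matroid an element `e` lies in exactly two flats, of
cardinalities `a+1` and `b+1`, then every other flat is a 2-element flat consisting
of one element from each of these flats (minus `e`), and the matroid has
`n = a + b + 1` elements, `ℓ = ab + 2` flats and `m = 2ab + a + b + 2` complete flags. -/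
theorem two_flat_element_structure {α : Type*} [DecidableEq α]
    (E : Finset α) (F : Finset (Finset α))
    (hsub : ∀ f ∈ F, f ⊆ E)
    (hpair : ∀ x ∈ E, ∀ y ∈ E, x ≠ y → ∃! f, f ∈ F ∧ x ∈ f ∧ y ∈ f)
    (hflat : ∀ f ∈ F, 2 ≤ f.card)
    (htwo : 2 ≤ F.card)
    (e : α) (he : e ∈ E)
    (f₁ f₂ : Finset α) (hf₁ : f₁ ∈ F) (hf₂ : f₂ ∈ F) (hne : f₁ ≠ f₂)
    (he₁ : e ∈ f₁) (he₂ : e ∈ f₂)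
    (honly : ∀ f ∈ F, e ∈ f → f = f₁ ∨ f = f₂)
    (a b : ℕ) (ha : f₁.card = a + 1) (hb : f₂.card = b + 1) :
    (∀ f ∈ F, f ≠ f₁ → f ≠ f₂ →
        ∃ x ∈ f₁.erase e, ∃ y ∈ f₂.erase e, f = {x, y}) ∧
      E.card = a + b + 1 ∧
      F.card = a * b + 2 ∧
      (∑ f ∈ F, f.card) = 2 * a * b + a + b + 2 := by
  -- intersection of f₁ and f₂ is {e}
  have hcap : ∀ x, x ∈ f₁ → x ∈ f₂ → x = e := by
    intro x hx1 hx2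
    by_contra hxe
    obtain ⟨g, _, hg⟩ := hpair x (hsub f₁ hf₁ hx1) e he hxe
    exact hne ((hg f₁ ⟨hf₁, hx1, he₁⟩).trans (hg f₂ ⟨hf₂, hx2, he₂⟩).symm)
  -- E = f₁ ∪ f₂
  have hEeq : E = f₁ ∪ f₂ := by
    ext x
    constructor
    · intro hx
      by_cases hxe : x = e
      · subst hxe; exact Finset.mem_union.mpr (Or.inl he₁)
      · obtain ⟨g, ⟨hgF, hxg, heg⟩, _⟩ := hpair x hx e he hxe
        rcases honly g hgF heg with rfl | rfl
        · exact Finset.mem_union.mpr (Or.inl hxg)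
        · exact Finset.mem_union.mpr (Or.inr hxg)
    · intro hx
      rcases Finset.mem_union.mp hx with h | h
      · exact hsub f₁ hf₁ h
      · exact hsub f₂ hf₂ h
  have hinter : f₁ ∩ f₂ = {e} := by
    ext x
    simp only [Finset.mem_inter, Finset.mem_singleton]
    constructor
    · rintro ⟨h1, h2⟩; exact hcap x h1 h2
    · rintro rfl; exact ⟨he₁, he₂⟩
  have hEcard : E.card = a + b + 1 := by
    have h := Finset.card_union_add_card_inter f₁ f₂
    rw [hinter, ha, hb, Finset.card_singleton] at h
    rw [hEeq]; omega
  -- structure of other flats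
  have hstruct : ∀ f ∈ F, f ≠ f₁ → f ≠ f₂ →
      ∃ x ∈ f₁.erase e, ∃ y ∈ f₂.erase e, f = {x, y} := by
    intro f hf h1 h2
    have hef : e ∉ f := fun h => by
      rcases honly f hf h with rfl | rfl
      · exact h1 rfl
      · exact h2 rfl
    have hsame1 : ∀ x ∈ f, ∀ y ∈ f, x ∈ f₁ → y ∈ f₁ → x = y := by
      intro x hx y hy hx1 hy1
      by_contra hxy
      obtain ⟨g, _, hg⟩ := hpair x (hsub f hf hx) y (hsub f hf hy) hxy
      exact h1 ((hg f ⟨hf, hx, hy⟩).trans (hg f₁ ⟨hf₁, hx1, hy1⟩).symm)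
    have hsame2 : ∀ x ∈ f, ∀ y ∈ f, x ∈ f₂ → y ∈ f₂ → x = y := by
      intro x hx y hy hx1 hy1
      by_contra hxy
      obtain ⟨g, _, hg⟩ := hpair x (hsub f hf hx) y (hsub f hf hy) hxy
      exact h2 ((hg f ⟨hf, hx, hy⟩).trans (hg f₂ ⟨hf₂, hx1, hy1⟩).symm)
    have key : ∀ x ∈ f, ∀ y ∈ f, x ∈ f₁ → y ∈ f₂ → f = {x, y} := by
      intro x hx y hy hx1 hy2
      ext z
      simp only [Finset.mem_insert, Finset.mem_singleton]
      constructor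
      · intro hz
        have hzE := hsub f hf hz
        rw [hEeq] at hzE
        rcases Finset.mem_union.mp hzE with hz1 | hz2
        · exact Or.inl (hsame1 z hz x hx hz1 hx1)
        · exact Or.inr (hsame2 z hz y hy hz2 hy2)
      · rintro (rfl | rfl) <;> assumption
    have hcard2 : 1 < f.card := hflat f hf
    obtain ⟨x, hx, y, hy, hxy⟩ := Finset.one_lt_card.mp hcard2
    have hxE := hsub f hf hx
    have hyE := hsub f hf hy
    rw [hEeq] at hxE hyE
    have hxne : x ≠ e := fun h => hef (h ▸ hx)
    have hyne : y ≠ e := fun h => hef (h ▸ hy)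
    rcases Finset.mem_union.mp hxE with hx1 | hx2 <;>
      rcases Finset.mem_union.mp hyE with hy1 | hy2
    · exact absurd (hsame1 x hx y hy hx1 hy1) hxy
    · exact ⟨x, Finset.mem_erase.mpr ⟨hxne, hx1⟩, y, Finset.mem_erase.mpr ⟨hyne, hy2⟩,
        key x hx y hy hx1 hy2⟩
    · refine ⟨y, Finset.mem_erase.mpr ⟨hyne, hy1⟩, x, Finset.mem_erase.mpr ⟨hxne, hx2⟩, ?_⟩
      rw [key y hy x hx hy1 hx2]
    · exact absurd (hsame2 x hx y hy hx2 hy2) hxy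
  -- any pair (x,y) gives a flat {x,y}
  have hmem : ∀ x ∈ f₁.erase e, ∀ y ∈ f₂.erase e, ({x, y} : Finset α) ∈ F := by
    intro x hx y hy
    obtain ⟨hxe, hx1⟩ := Finset.mem_erase.mp hx
    obtain ⟨hye, hy2⟩ := Finset.mem_erase.mp hy
    have hxy : x ≠ y := fun h => hxe (hcap x hx1 (h ▸ hy2))
    obtain ⟨g, ⟨hgF, hxg, hyg⟩, _⟩ := hpair x (hsub f₁ hf₁ hx1) y (hsub f₂ hf₂ hy2) hxy
    have hg1 : g ≠ f₁ := fun h => hye (hcap y (h ▸ hyg) hy2)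
    have hg2 : g ≠ f₂ := fun h => hxe (hcap x hx1 (h ▸ hxg))
    obtain ⟨x', hx', y', hy', hgeq⟩ := hstruct g hgF hg1 hg2
    obtain ⟨hx'e, hx'1⟩ := Finset.mem_erase.mp hx'
    obtain ⟨hy'e, hy'2⟩ := Finset.mem_erase.mp hy'
    have hxx' : x = x' := by
      have := hgeq ▸ hxg
      rcases Finset.mem_insert.mp this with h | h
      · exact h
      · rw [Finset.mem_singleton] at h
        exact absurd (hcap x hx1 (h ▸ hy'2)) hxe
    have hyy' : y = y' := by
      have := hgeq ▸ hyg
      rcases Finset.mem_insert.mp this with h | h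
      · exact absurd (hcap y (h ▸ hx'1) hy2) hye
      · exact Finset.mem_singleton.mp h
    have : ({x, y} : Finset α) = g := by rw [hgeq, hxx', hyy']
    rw [this]; exact hgF
  have hsubpair : ({f₁, f₂} : Finset (Finset α)) ⊆ F := by
    intro g hg
    rcases Finset.mem_insert.mp hg with rfl | hg
    · exact hf₁
    · rw [Finset.mem_singleton] at hg; subst hg; exact hf₂
  -- card of the rest via bijection
  have hcardS : (F \ {f₁, f₂}).card = a * b := by
    have hbij : ((f₁.erase e) ×ˢ (f₂.erase e)).card = (F \ {f₁, f₂}).card := by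
      apply Finset.card_bij (fun p _ => ({p.1, p.2} : Finset α))
      · rintro ⟨x, y⟩ hp
        obtain ⟨hx, hy⟩ := Finset.mem_product.mp hp
        simp only [Finset.mem_sdiff, Finset.mem_insert, Finset.mem_singleton]
        refine ⟨hmem x hx y hy, ?_⟩
        rintro (h | h)
        · exact (Finset.mem_erase.mp hx).1 (hcap _ ((Finset.mem_erase.mp hx).2)
            (by
              have : e ∈ ({x, y} : Finset α) := h ▸ he₁
              rcases Finset.mem_insert.mp this with h' | h'
              · exact absurd h'.symm (Finset.mem_erase.mp hx).1
              · exact absurd (Finset.mem_singleton.mp h').symm (Finset.mem_erase.mp hy).1)) |>.elim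
        · have : e ∈ ({x, y} : Finset α) := h ▸ he₂
          rcases Finset.mem_insert.mp this with h' | h'
          · exact (Finset.mem_erase.mp hx).1 h'.symm
          · exact (Finset.mem_erase.mp hy).1 (Finset.mem_singleton.mp h').symm
      · rintro ⟨x, y⟩ hp ⟨x', y'⟩ hp' heq
        obtain ⟨hx, hy⟩ := Finset.mem_product.mp hp
        obtain ⟨hx', hy'⟩ := Finset.mem_product.mp hp'
        simp only at heq
        have hxx' : x = x' := by
          have : x ∈ ({x', y'} : Finset α) := heq ▸ Finset.mem_insert_self x {y}
          rcases Finset.mem_insert.mp this with h | h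
          · exact h
          · rw [Finset.mem_singleton] at h
            exact absurd (hcap x (Finset.mem_erase.mp hx).2 (h ▸ (Finset.mem_erase.mp hy').2))
              (Finset.mem_erase.mp hx).1
        have hyy' : y = y' := by
          have : y ∈ ({x', y'} : Finset α) := heq ▸ (by simp)
          rcases Finset.mem_insert.mp this with h | h
          · exact absurd (hcap y (h ▸ (Finset.mem_erase.mp hx').2) (Finset.mem_erase.mp hy).2)
              (Finset.mem_erase.mp hy).1
          · exact Finset.mem_singleton.mp h
        simp [hxx', hyy']
      · intro f hf
        obtain ⟨hfF, hfne⟩ := Finset.mem_sdiff.mp hf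
        simp only [Finset.mem_insert, Finset.mem_singleton, not_or] at hfne
        obtain ⟨x, hx, y, hy, hfeq⟩ := hstruct f hfF hfne.1 hfne.2
        exact ⟨(x, y), Finset.mem_product.mpr ⟨hx, hy⟩, hfeq.symm⟩
    have h1 : (f₁.erase e).card = a := by rw [Finset.card_erase_of_mem he₁, ha]; omega
    have h2 : (f₂.erase e).card = b := by rw [Finset.card_erase_of_mem he₂, hb]; omega
    rw [← hbij, Finset.card_product, h1, h2]
  have hpaircard : ({f₁, f₂} : Finset (Finset α)).card = 2 := by
    rw [Finset.card_insert_of_notMem (by simpa using hne), Finset.card_singleton]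
  have hFcard : F.card = a * b + 2 := by
    have := Finset.card_sdiff_add_card_eq_card hsubpair
    rw [hcardS, hpaircard] at this
    omega
  refine ⟨hstruct, hEcard, hFcard, ?_⟩
  -- sum of cards
  have hsum := Finset.sum_sdiff (f := fun f => f.card) hsubpair
  have hrest : ∑ f ∈ F \ {f₁, f₂}, f.card = 2 * (a * b) := by
    rw [Finset.sum_congr rfl (fun f hf => ?_), Finset.sum_const, hcardS, smul_eq_mul, Nat.mul_comm]
    obtain ⟨hfF, hfne⟩ := Finset.mem_sdiff.mp hf
    simp only [Finset.mem_insert, Finset.mem_singleton, not_or] at hfne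
    obtain ⟨x, hx, y, hy, hfeq⟩ := hstruct f hfF hfne.1 hfne.2
    have hxy : x ≠ y := fun h =>
      (Finset.mem_erase.mp hx).1 (hcap x (Finset.mem_erase.mp hx).2 (h ▸ (Finset.mem_erase.mp hy).2))
    rw [hfeq, Finset.card_insert_of_notMem (by simpa using hxy), Finset.card_singleton]
  have hpairsum : ∑ f ∈ ({f₁, f₂} : Finset (Finset α)), f.card = (a + 1) + (b + 1) := by
    rw [Finset.sum_pair hne, ha, hb]
  rw [← hsum, hrest, hpairsum]
  ring
end

section
/- Let H_1, …, H_m be hyperplanes (codimension-1 linear subspaces, or more generally kernels of nonzero linear functionals) in the vector space k^N over a field k, and let c be the codimension of H_1 ∩ ⋯ ∩ H_m. If k is infinite, or if k is finite with q elements and q > m − c + 1, then there exists a point of k^N not contained in any of the H_i. -/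
open Module Submodule

/-- If a functional `f` vanishes on `ker g` and `g u = 1`, then `f = (f u) • g`. -/
lemma hp_funct_eq_smul {k V : Type*} [Field k] [AddCommGroup V] [Module k V]
    (g f : V →ₗ[k] k) (u : V) (hu : g u = 1) (h : ∀ v, g v = 0 → f v = 0) :
    f = f u • g := by
  ext v
  have hv : g (v - g v • u) = 0 := by simp [hu]
  have h2 := h _ hv
  simp only [map_sub, map_smul, smul_eq_mul, sub_eq_zero] at h2
  simp only [LinearMap.smul_apply, smul_eq_mul]
  rw [h2]; ring

/-- Linearly independent functionals admit a dual family element. -/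
lemma hp_exists_dual_vec {k V : Type*} [Field k] [AddCommGroup V] [Module k V] {n : ℕ}
    (b : Fin n → (V →ₗ[k] k)) (hb : LinearIndependent k b) (i₀ : Fin n) :
    ∃ u, b i₀ u = 1 ∧ ∀ i, i ≠ i₀ → b i u = 0 := by
  have hsurj : Function.Surjective (LinearMap.pi b) := by
    rw [← LinearMap.range_eq_top]
    by_contra h
    obtain ⟨g, hg0, hker⟩ := Submodule.exists_le_ker_of_lt_top _ (lt_top_iff_ne_top.2 h)
    have hcomb : ∀ v : V, ∑ i, g (Pi.single i 1) * b i v = 0 := by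
      intro v
      have h1 : g (LinearMap.pi b v) = 0 := hker (LinearMap.mem_range_self _ v)
      have h2 : (LinearMap.pi b v) = ∑ i, (b i v) • (Pi.single i (1 : k) : Fin n → k) := by
        ext jj
        simp [LinearMap.pi_apply, Pi.single_apply, eq_comm]
      rw [h2, map_sum] at h1
      simpa [mul_comm] using h1
    have hz := Fintype.linearIndependent_iff.mp hb (fun i => g (Pi.single i 1)) ?_
    · apply hg0
      ext x
      simpa using hz x
    · ext v
      simpa using hcomb v
  obtain ⟨u, hu⟩ := hsurj (Pi.single i₀ 1)
  refine ⟨u, ?_, fun i hi => ?_⟩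
  · have := congrFun hu i₀
    simpa [LinearMap.pi_apply] using this
  · have := congrFun hu i
    simpa [LinearMap.pi_apply, Pi.single_apply, hi] using this

lemma hp_aux {k : Type u} [Field k] (m : ℕ) :
    ∀ {V : Type v} [AddCommGroup V] [Module k V] [FiniteDimensional k V]
    (φ : Fin m → (V →ₗ[k] k)), (∀ i, φ i ≠ 0) →
    (Infinite k ∨ ∃ _ : Fintype k,
      m - Module.finrank k (Submodule.span k (Set.range φ)) + 1 < Fintype.card k) →
    ∃ x, ∀ i, φ i x ≠ 0 := by
  induction m using Nat.strong_induction_on with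
  | _ m IH =>
  intro V _ _ _ φ hφ hk
  classical
  rcases Nat.eq_zero_or_pos m with hm | hm
  · subst hm
    exact ⟨0, fun i => i.elim0⟩
  set D := Submodule.span k (Set.range φ) with hD
  -- D is finite dimensional, c ≥ 1
  have hDbot : D ≠ ⊥ := by
    intro hbot
    have : φ ⟨0, hm⟩ ∈ D := subset_span (Set.mem_range_self _)
    rw [hbot, Submodule.mem_bot] at this
    exact hφ _ this
  have hc1 : 1 ≤ Module.finrank k D := by
    by_contra h
    push_neg at h
    interval_cases h' : Module.finrank k D
    exact hDbot (Submodule.finrank_eq_zero.mp h')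
  obtain ⟨n, hn⟩ : ∃ n, Module.finrank k D = n + 1 :=
    ⟨Module.finrank k D - 1, by omega⟩
  -- extract a basis of D from the range of φ
  obtain ⟨s, hsub, hspan, hind⟩ := exists_linearIndependent k (Set.range φ)
  haveI : Fintype s := ((Set.finite_range φ).subset hsub).fintype
  have hcards : Fintype.card s = n + 1 := by
    rw [← Set.toFinset_card, ← finrank_span_set_eq_card hind, hspan, ← hD, hn]
  let e : Fin (n + 1) ≃ s := (Fintype.equivFinOfCardEq hcards).symm
  let b : Fin (n + 1) → (V →ₗ[k] k) := fun i => (e i : V →ₗ[k] k)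
  have hb : LinearIndependent k b := hind.comp e e.injective
  -- indices for the basis elements
  have hjex : ∀ i, ∃ t, φ t = b i := fun i => hsub (e i).2
  choose j hj using hjex
  have hjinj : Function.Injective j := by
    intro a a' h
    apply e.injective
    apply Subtype.ext
    show b a = b a'
    rw [← hj, ← hj, h]
  have hcm : n + 1 ≤ m := by simpa using Fintype.card_le_of_injective j hjinj
  -- dual vector u
  obtain ⟨u, hu1, hu0⟩ := hp_exists_dual_vec b hb 0
  -- the set J of "bad" indices
  set J : Finset (Fin m) := Finset.univ.filter (fun t => φ t u = 0) with hJ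
  have hj0J : j 0 ∉ J := by
    simp only [hJ, Finset.mem_filter, Finset.mem_univ, true_and]
    rw [hj, hu1]
    exact one_ne_zero
  have hJcard : J.card ≤ m - 1 := by
    have : J ⊆ Finset.univ.erase (j 0) :=
      fun t ht => Finset.mem_erase.2 ⟨fun h => hj0J (h ▸ ht), Finset.mem_univ t⟩
    have h2 := Finset.card_le_card this
    rwa [Finset.card_erase_of_mem (Finset.mem_univ _), Finset.card_univ, Fintype.card_fin] at h2
  -- the sub-instance on ker (b 0)
  set V' := LinearMap.ker (b 0) with hV'
  let e2 : Fin J.card ≃ {t // t ∈ J} := J.equivFin.symm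
  let ψ : Fin J.card → (V' →ₗ[k] k) := fun i => (φ (e2 i)).comp V'.subtype
  have hkerval : ∀ t (h0 : ∀ v : V, b 0 v = 0 → φ t v = 0), φ t = (φ t u) • b 0 :=
    fun t h0 => hp_funct_eq_smul (b 0) (φ t) u hu1 h0
  have hψ : ∀ i, ψ i ≠ 0 := by
    intro i h0
    have hmem : φ (e2 i : Fin m) u = 0 := (Finset.mem_filter.mp (e2 i).2).2
    have : φ (e2 i : Fin m) = 0 := by
      rw [hkerval _ (fun v hv => by
        have := congrFun (congrArg DFunLike.coe h0) ⟨v, hv⟩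
        simpa [ψ] using this), hmem, zero_smul]
    exact hφ _ this
  -- the restricted basis functionals, giving a lower bound on the rank
  let g : Fin n → (V' →ₗ[k] k) := fun i => (b i.succ).comp V'.subtype
  have hg : LinearIndependent k g := by
    rw [Fintype.linearIndependent_iff]
    intro l hl
    set h := ∑ i, l i • b i.succ with hh
    have hker : ∀ v, b 0 v = 0 → h v = 0 := by
      intro v hv
      have := congrFun (congrArg DFunLike.coe hl) ⟨v, hv⟩
      simpa [g, h] using this
    have heq : h = (h u) • b 0 := hp_funct_eq_smul (b 0) h u hu1 hker
    have hz := Fintype.linearIndependent_iff.mp hb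
      (fun i => Fin.cases (-(h u)) l i) ?_
    · intro i
      have := hz i.succ
      simpa using this
    · rw [Fin.sum_univ_succ]
      simp only [Fin.cases_zero, Fin.cases_succ]
      rw [← hh, neg_smul, ← heq]
      abel
  have hrank : n ≤ Module.finrank k (Submodule.span k (Set.range ψ)) := by
    have hgm : ∀ i, g i ∈ Submodule.span k (Set.range ψ) := by
      intro i
      have hjJ : j i.succ ∈ J := Finset.mem_filter.mpr
        ⟨Finset.mem_univ _, by rw [hj]; exact hu0 i.succ (Fin.succ_ne_zero i)⟩
      have : ψ (e2.symm ⟨j i.succ, hjJ⟩) = g i := by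
        simp only [ψ, g, Equiv.apply_symm_apply]
        rw [hj]
      exact this ▸ subset_span (Set.mem_range_self _)
    have hle : Submodule.span k (Set.range g) ≤ Submodule.span k (Set.range ψ) := by
      rw [Submodule.span_le]
      rintro _ ⟨i, rfl⟩
      exact hgm i
    have := Submodule.finrank_mono hle
    rwa [finrank_span_eq_card hg, Fintype.card_fin] at this
  -- apply the induction hypothesis
  have hk' : Infinite k ∨ ∃ _ : Fintype k,
      J.card - Module.finrank k (Submodule.span k (Set.range ψ)) + 1 < Fintype.card k := by
    rcases hk with h | ⟨inst, h⟩
    · exact Or.inl h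
    · refine Or.inr ⟨inst, ?_⟩
      rw [hn] at h
      omega
  obtain ⟨w', hw'⟩ := IH J.card (by omega) ψ hψ hk'
  set w : V := (w' : V) with hw
  have hw0 : b 0 w = 0 := w'.2
  have hwJ : ∀ t ∈ J, φ t w ≠ 0 := by
    intro t ht
    have := hw' (e2.symm ⟨t, ht⟩)
    simpa [ψ, Equiv.apply_symm_apply] using this
  have hUW : ∀ t, φ t u = 0 → φ t w ≠ 0 := by
    intro t htu
    exact hwJ t (Finset.mem_filter.mpr ⟨Finset.mem_univ _, htu⟩)
  -- the "killed candidate" function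
  set F : Fin m → Option k :=
    fun t => if φ t w = 0 then none else some (-(φ t u) / (φ t w)) with hF
  set K : Finset (Option k) := Finset.univ.image F with hK
  -- count the killed candidates
  have hKsub : K ⊆ insert none (insert (some 0)
      ((Finset.univ \ Finset.univ.image j).image F)) := by
    intro p hp
    rw [hK, Finset.mem_image] at hp
    obtain ⟨t, -, rfl⟩ := hp
    by_cases ht : t ∈ Finset.univ.image j
    · rw [Finset.mem_image] at ht
      obtain ⟨i, -, rfl⟩ := ht
      refine Fin.cases ?_ ?_ i
      · have hF0 : F (j 0) = none := by
          rw [hF]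
          simp [hj, hw0]
        rw [hF0]
        exact Finset.mem_insert_self _ _
      · intro i'
        have hsu : φ (j i'.succ) u = 0 := by
          rw [hj]; exact hu0 i'.succ (Fin.succ_ne_zero i')
        have hsw : φ (j i'.succ) w ≠ 0 := hUW _ hsu
        have hFi : F (j i'.succ) = some 0 := by
          rw [hF]
          simp only [if_neg hsw, hsu, neg_zero, zero_div]
        rw [hFi]
        exact Finset.mem_insert_of_mem (Finset.mem_insert_self _ _)
    · exact Finset.mem_insert_of_mem (Finset.mem_insert_of_mem
        (Finset.mem_image.2 ⟨t, Finset.mem_sdiff.2 ⟨Finset.mem_univ _, ht⟩, rfl⟩))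
  have hKcard : K.card ≤ (m - (n + 1)) + 2 := by
    have h1 := Finset.card_le_card hKsub
    have h2 : ((Finset.univ \ Finset.univ.image j).image F).card ≤ m - (n + 1) := by
      refine le_trans Finset.card_image_le ?_
      rw [Finset.card_sdiff_of_subset (Finset.subset_univ _), Finset.card_univ, Fintype.card_fin,
        Finset.card_image_of_injective _ hjinj, Finset.card_univ, Fintype.card_fin]
    have c1 := Finset.card_insert_le (none : Option k)
      (insert (some 0) ((Finset.univ \ Finset.univ.image j).image F))
    have c2 := Finset.card_insert_le (some (0 : k))
      ((Finset.univ \ Finset.univ.image j).image F)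
    omega
  -- pick a candidate not killed
  have hpex : ∃ p : Option k, p ∉ K := by
    rcases hk with h | ⟨inst, h⟩
    · haveI := h
      exact Infinite.exists_notMem_finset K
    · have hcard : K.card < Fintype.card (Option k) := by
        rw [Fintype.card_option]
        rw [hn] at h
        omega
      have : (Kᶜ : Finset (Option k)).Nonempty := by
        rw [← Finset.card_pos, Finset.card_compl]
        omega
      obtain ⟨p, hp⟩ := this
      exact ⟨p, Finset.mem_compl.mp hp⟩
  obtain ⟨p, hp⟩ := hpex
  have hpF : ∀ t, F t ≠ p := by
    intro t ht
    exact hp (ht ▸ Finset.mem_image.2 ⟨t, Finset.mem_univ _, rfl⟩)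
  -- construct the avoiding point
  match p, hpF with
  | none, hpF =>
    refine ⟨w, fun t htw => ?_⟩
    have : F t = none := by rw [hF]; simp [htw]
    exact hpF t this
  | some r, hpF =>
    refine ⟨u + r • w, fun t ht => ?_⟩
    rw [map_add, map_smul, smul_eq_mul] at ht
    by_cases htw : φ t w = 0
    · rw [htw, mul_zero, add_zero] at ht
      exact hUW t ht htw
    · have hr : -(φ t) u / (φ t) w = r := by
        rw [div_eq_iff htw]; linear_combination -ht
      exact hpF t (by rw [hF]; simp only [if_neg htw, hr])

/-- Hyperplane avoidance: if `H_1, …, H_m` are hyperplanes (kernels of nonzero linear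
functionals) in `k^N` with intersection of codimension `c`, and `k` is infinite or a
finite field with `q > m − c + 1` elements, then some point of `k^N` avoids all of
them. -/
theorem hyperplane_avoidance {k : Type*} [Field k] {N m : ℕ}
    (φ : Fin m → ((Fin N → k) →ₗ[k] k)) (hφ : ∀ i, φ i ≠ 0)
    (c : ℕ) (hc : c = N - Module.finrank k ↥(⨅ i, LinearMap.ker (φ i)))
    (hk : Infinite k ∨ ∃ _ : Fintype k, m - c + 1 < Fintype.card k) :
    ∃ x : Fin N → k, ∀ i, φ i x ≠ 0 := by
  have hco : (⨅ i, LinearMap.ker (φ i)) =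
      (Submodule.span k (Set.range φ)).dualCoannihilator := by
    ext x
    rw [Submodule.mem_iInf, Submodule.mem_dualCoannihilator]
    constructor
    · intro h f hf
      induction hf using Submodule.span_induction with
      | mem f hf => obtain ⟨i, rfl⟩ := hf; exact h i
      | zero => simp
      | add f g _ _ hf hg => simp [hf, hg]
      | smul a f _ hf => simp [hf]
    · intro h i
      exact LinearMap.mem_ker.mpr (h _ (Submodule.subset_span (Set.mem_range_self i)))
  have hdim := Subspace.finrank_add_finrank_dualCoannihilator_eq
    (Submodule.span k (Set.range φ))
  rw [← hco] at hdim
  have hN : Module.finrank k (Fin N → k) = N := by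
    rw [Module.finrank_pi]
    exact Fintype.card_fin N
  rw [hN] at hdim
  have hdim' : Module.finrank k ↥(Submodule.span k (Set.range φ)) +
      Module.finrank k ↥(⨅ i, LinearMap.ker (φ i)) = N := hdim
  have hceq : c = Module.finrank k ↥(Submodule.span k (Set.range φ)) := by omega
  apply hp_aux m φ hφ
  rw [← hceq]
  exact hk
end

section
/- In k^c with k a finite field of q elements, the complement of the c coordinate hyperplanes has exactly (q−1)^c points, and any linear hyperplane in k^c contains at most (q−1)^{c−1} of these points. -/
/-- In `k^c` over a finite field `k` of `q` elements, the complement of the `c`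
coordinate hyperplanes has exactly `(q−1)^c` points, and any linear hyperplane
(kernel of a nonzero linear functional) contains at most `(q−1)^(c−1)` of them. -/
theorem coordinate_complement_count {k : Type*} [Field k] [Fintype k]
    (q c : ℕ) (hq : Fintype.card k = q)
    (φ : (Fin c → k) →ₗ[k] k) (hφ : φ ≠ 0) :
    Nat.card {x : Fin c → k // ∀ i, x i ≠ 0} = (q - 1) ^ c ∧
      Nat.card {x : Fin c → k // (∀ i, x i ≠ 0) ∧ φ x = 0} ≤ (q - 1) ^ (c - 1) := by
  classical
  have hk : Nat.card {a : k // a ≠ 0} = q - 1 := by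
    rw [Nat.card_eq_fintype_card, Fintype.card_subtype_compl]
    simp [hq, Fintype.card_subtype_eq]
  have hcount : ∀ (ι : Type) [Fintype ι],
      Nat.card {f : ι → k // ∀ i, f i ≠ 0} = (q - 1) ^ Fintype.card ι := by
    intro ι _
    rw [Nat.card_congr (Equiv.subtypePiEquivPi (p := fun (_ : ι) (b : k) => b ≠ 0)),
      Nat.card_pi]
    simp [hk, hq]
  constructor
  · simpa using hcount (Fin c)
  · set a : Fin c → k := fun j => φ (fun m => if j = m then 1 else 0) with ha
    have key : ∀ z : Fin c → k, φ z = ∑ m, z m • a m := fun z =>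
      LinearMap.pi_apply_eq_sum_univ φ z
    have hex : ∃ i, a i ≠ 0 := by
      by_contra h
      push_neg at h
      apply hφ
      refine LinearMap.ext fun x => ?_
      rw [LinearMap.zero_apply, key]
      exact Finset.sum_eq_zero fun m _ => by rw [h m, smul_zero]
    obtain ⟨i, hi⟩ := hex
    have hinj : Function.Injective
        (fun (x : {x : Fin c → k // (∀ i, x i ≠ 0) ∧ φ x = 0}) =>
          (⟨fun j : {j : Fin c // j ≠ i} => x.1 j.1, fun j => x.2.1 j.1⟩ :
            {f : {j : Fin c // j ≠ i} → k // ∀ j, f j ≠ 0})) := by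
      rintro ⟨x, hx1, hx2⟩ ⟨y, hy1, hy2⟩ h
      simp only [Subtype.mk.injEq] at h ⊢
      have hrest : ∀ j : Fin c, j ≠ i → x j = y j := fun j hj =>
        congrFun h ⟨j, hj⟩
      funext j
      by_cases hji : j = i
      · subst hji
        rw [key] at hx2 hy2
        rw [← Finset.add_sum_erase Finset.univ _ (Finset.mem_univ j)] at hx2 hy2
        have hsum : ∑ m ∈ Finset.univ.erase j, x m • a m
            = ∑ m ∈ Finset.univ.erase j, y m • a m :=
          Finset.sum_congr rfl fun m hm => by
            rw [hrest m (Finset.ne_of_mem_erase hm)]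
        rw [hsum] at hx2
        have : x j • a j = y j • a j := add_right_cancel (hx2.trans hy2.symm)
        exact mul_right_cancel₀ hi (by simpa [smul_eq_mul] using this)
      · exact hrest j hji
    calc Nat.card {x : Fin c → k // (∀ i, x i ≠ 0) ∧ φ x = 0}
        ≤ Nat.card {f : {j : Fin c // j ≠ i} → k // ∀ j, f j ≠ 0} :=
          Nat.card_le_card_of_injective _ hinj
      _ = (q - 1) ^ (c - 1) := by
          rw [hcount]
          congr 1
          simp [Fintype.card_subtype_compl]
end

section
/- Let M be a rank 3 simple matroid with n elements, ℓ flats, and m complete flags. Then m − 2n + 1 ≥ ℓ − 2; equivalently, 2n ≤ m − ℓ + 3. -/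
/-!
Fix a flat `L`, two points `p ≠ x` on it and a point `q` off it. The flats through a point `t`
partition the other points, so `∑_{f ∋ t} #(S ∩ f) = #S` for every `S ⊆ E ∖ {t}`. Taking `(t, S)`
to be `(p, E ∖ {p})`, `(x, E ∖ L)` and `(q, L ∖ {p, x})` gives in total
`(n - 1) + (n - #L) + (#L - 2) = 2n - 3`. Since two distinct flats meet in at most one point, each
flat `f` contributes at most `#f - 1` to this total.
-/

open Finset

section
variable {α : Type*} [DecidableEq α] {E : Finset α} {F : Finset (Finset α)}

theorem card_inter_le_one_of_ne (hsub : ∀ f ∈ F, f ⊆ E)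
    (hpair : ∀ x ∈ E, ∀ y ∈ E, x ≠ y → ∃! f, f ∈ F ∧ x ∈ f ∧ y ∈ f)
    {f g : Finset α} (hf : f ∈ F) (hg : g ∈ F) (hfg : f ≠ g) : #(f ∩ g) ≤ 1 := by
  refine card_le_one.mpr fun a ha b hb => ?_
  rw [mem_inter] at ha hb
  by_contra hab
  exact hfg ((hpair a (hsub f hf ha.1) b (hsub f hf hb.1) hab).unique
    ⟨hf, ha.1, hb.1⟩ ⟨hg, ha.2, hb.2⟩)

theorem sum_card_inter_pencil
    (hpair : ∀ x ∈ E, ∀ y ∈ E, x ≠ y → ∃! f, f ∈ F ∧ x ∈ f ∧ y ∈ f)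
    {p : α} (hp : p ∈ E) {S : Finset α} (hS : S ⊆ E) (hpS : p ∉ S) :
    ∑ f ∈ F with p ∈ f, #(S ∩ f) = #S := by
  rw [sum_card_inter (n := 1) fun y hy => ?_, mul_one]
  obtain ⟨f, hf, hf_unique⟩ := hpair p hp y (hS hy) (ne_of_mem_of_not_mem hy hpS).symm
  refine card_eq_one.mpr ⟨f, eq_singleton_iff_unique_mem.mpr ⟨?_, fun g hg => ?_⟩⟩
  · simpa [and_assoc] using hf
  · exact hf_unique g (by simpa [and_assoc] using hg)

theorem exists_flat_and_point_not_mem (hsub : ∀ f ∈ F, f ⊆ E)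
    (hpair : ∀ x ∈ E, ∀ y ∈ E, x ≠ y → ∃! f, f ∈ F ∧ x ∈ f ∧ y ∈ f)
    (hflat : ∀ f ∈ F, 2 ≤ #f) (htwo : 2 ≤ #F) : ∃ L ∈ F, ∃ q ∈ E, q ∉ L := by
  obtain ⟨L, hL, g, hg, hLg⟩ := one_lt_card.mp htwo
  refine ⟨L, hL, ?_⟩
  by_contra! hgL
  have hg_sub : g ⊆ L ∩ g := fun y hy => mem_inter.mpr ⟨hgL y (hsub g hg hy), hy⟩
  have := (card_le_card hg_sub).trans (card_inter_le_one_of_ne hsub hpair hL hg hLg)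
  have := hflat g hg
  omega

theorem card_inter_pencils_le_card_sub_one (hsub : ∀ f ∈ F, f ⊆ E)
    (hpair : ∀ x ∈ E, ∀ y ∈ E, x ≠ y → ∃! f, f ∈ F ∧ x ∈ f ∧ y ∈ f)
    (hflat : ∀ f ∈ F, 2 ≤ #f) {L : Finset α} (hL : L ∈ F) {p x q : α}
    (hp : p ∈ L) (hx : x ∈ L) (hpx : p ≠ x) (hq : q ∉ L) {f : Finset α} (hf : f ∈ F) :
    (if p ∈ f then #(E.erase p ∩ f) else 0) + (if x ∈ f then #((E \ L) ∩ f) else 0) +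
      (if q ∈ f then #((L.erase p).erase x ∩ f) else 0) ≤ #f - 1 := by
  have hfE := hsub f hf
  rw [erase_inter, erase_inter, erase_inter, sdiff_inter_right_comm, inter_eq_right.mpr hfE,
    card_sdiff, card_erase_eq_ite, card_erase_eq_ite, card_erase_eq_ite]
  have hLf : #(L ∩ f) ≤ #f := card_le_card inter_subset_right
  have h2 := hflat f hf
  by_cases hfL : f = L
  · subst hfL
    simp [hp, hx, hq]
  have hk := card_inter_le_one_of_ne hsub hpair hL hf (Ne.symm hfL)
  have hpk : p ∈ f → 0 < #(L ∩ f) := fun h => card_pos.mpr ⟨p, mem_inter.mpr ⟨hp, h⟩⟩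
  have hxk : x ∈ f → 0 < #(L ∩ f) := fun h => card_pos.mpr ⟨x, mem_inter.mpr ⟨hx, h⟩⟩
  have hpxk : p ∈ f → x ∈ f → 1 < #(L ∩ f) := fun h h' =>
    one_lt_card.mpr ⟨p, mem_inter.mpr ⟨hp, h⟩, x, mem_inter.mpr ⟨hx, h'⟩, hpx⟩
  by_cases hpf : p ∈ f <;> by_cases hxf : x ∈ f <;>
    simp only [hpf, hxf, hp, hx, hpx.symm, mem_erase, mem_inter, ne_eq, true_and, and_true,
      not_false_eq_true, if_true, if_false, true_implies, false_implies] at hpk hxk hpxk ⊢ <;>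
    split_ifs <;> omega

theorem two_mul_card_le_sum_card_sub_one_add_three (hsub : ∀ f ∈ F, f ⊆ E)
    (hpair : ∀ x ∈ E, ∀ y ∈ E, x ≠ y → ∃! f, f ∈ F ∧ x ∈ f ∧ y ∈ f)
    (hflat : ∀ f ∈ F, 2 ≤ #f) {L : Finset α} (hL : L ∈ F) {p x q : α}
    (hp : p ∈ L) (hx : x ∈ L) (hpx : p ≠ x) (hqE : q ∈ E) (hq : q ∉ L) :
    2 * #E ≤ ∑ f ∈ F, (#f - 1) + 3 := by
  have hLE := hsub L hL
  have hpencil_p := sum_card_inter_pencil hpair (hLE hp) (erase_subset p E) (notMem_erase p E)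
  have hpencil_x := sum_card_inter_pencil hpair (hLE hx) sdiff_subset
    (fun h => (mem_sdiff.mp h).2 hx)
  have hpencil_q := sum_card_inter_pencil hpair hqE (S := (L.erase p).erase x)
    (((erase_subset _ _).trans (erase_subset _ _)).trans hLE)
    (fun h => hq (mem_of_mem_erase (mem_of_mem_erase h)))
  have hpencils : ∑ f ∈ F with p ∈ f, #(E.erase p ∩ f) + ∑ f ∈ F with x ∈ f, #((E \ L) ∩ f) +
      ∑ f ∈ F with q ∈ f, #((L.erase p).erase x ∩ f) ≤ ∑ f ∈ F, (#f - 1) := by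
    simp only [sum_filter, ← sum_add_distrib]
    exact sum_le_sum fun f hf =>
      card_inter_pencils_le_card_sub_one hsub hpair hflat hL hp hx hpx hq hf
  rw [hpencil_p, hpencil_x, hpencil_q, card_erase_of_mem (hLE hp), card_sdiff_of_subset hLE,
    card_erase_of_mem (mem_erase.mpr ⟨hpx.symm, hx⟩), card_erase_of_mem hp] at hpencils
  have := card_le_card hLE
  have := hflat L hL
  omega

end

/-- For a rank 3 simple matroid with `n` elements, `ℓ` flats and `m` complete flags,
`m − 2n + 1 ≥ ℓ − 2`, equivalently `2n ≤ m − ℓ + 3` (stated over `ℤ`). -/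
theorem flags_flats_inequality {α : Type*} [DecidableEq α]
    (E : Finset α) (F : Finset (Finset α))
    (hsub : ∀ f ∈ F, f ⊆ E)
    (hpair : ∀ x ∈ E, ∀ y ∈ E, x ≠ y → ∃! f, f ∈ F ∧ x ∈ f ∧ y ∈ f)
    (hflat : ∀ f ∈ F, 2 ≤ f.card)
    (htwo : 2 ≤ F.card) :
    2 * (E.card : ℤ) ≤ (∑ f ∈ F, (f.card : ℤ)) - (F.card : ℤ) + 3 := by
  obtain ⟨L, hL, q, hqE, hq⟩ := exists_flat_and_point_not_mem hsub hpair hflat htwo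
  obtain ⟨p, hp, x, hx, hpx⟩ := one_lt_card.mp (hflat L hL)
  have key := two_mul_card_le_sum_card_sub_one_add_three hsub hpair hflat hL hp hx hpx hqE hq
  have hcast : ((∑ f ∈ F, (#f - 1) : ℕ) : ℤ) = ∑ f ∈ F, (#f : ℤ) - #F := by
    rw [Nat.cast_sum, card_eq_sum_ones F, Nat.cast_sum, ← sum_sub_distrib]
    refine sum_congr rfl fun f hf => ?_
    have := hflat f hf
    omega
  omega
end

section
/- In the Levi graph Γ_M of a rank 3 simple matroid M, the divisor D_M = Σ_{e ∈ E} [e] (one chip on each element-vertex) has the property that for every effective divisor E of degree 2, D_M − E is linearly equivalent to an effective divisor. That is, the Baker–Norine rank of D_M is at least 2. -/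
/-- Adjacency of the Levi graph of a matroid: element-vertices are adjacent to the
flat-vertices containing them. -/
def leviAdj {α : Type*} [DecidableEq α] (F : Finset (Finset α)) :
    (α ⊕ {f : Finset α // f ∈ F}) → (α ⊕ {f : Finset α // f ∈ F}) → Bool
  | Sum.inl e, Sum.inr f => decide (e ∈ f.1)
  | Sum.inr f, Sum.inl e => decide (e ∈ f.1)
  | _, _ => false

/-- The effect of a chip-firing script `σ` (fire vertex `v` a total of `σ v` times)
on divisors of the Levi graph: the Laplacian of `σ`. -/
def leviLap {α : Type*} [Fintype α] [DecidableEq α] (F : Finset (Finset α))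
    (σ : (α ⊕ {f : Finset α // f ∈ F}) → ℤ)
    (v : α ⊕ {f : Finset α // f ∈ F}) : ℤ :=
  ∑ u : α ⊕ {f : Finset α // f ∈ F}, if leviAdj F v u then σ v - σ u else 0

/-- The matroid divisor `D_M` (one chip on each element-vertex of the Levi graph). -/
def matroidDivisor {α : Type*} [DecidableEq α] (F : Finset (Finset α)) :
    (α ⊕ {f : Finset α // f ∈ F}) → ℤ :=
  Sum.elim (fun _ => 1) (fun _ => 0)

section Aux

variable {α : Type*} [Fintype α] [DecidableEq α] (F : Finset (Finset α))

lemma lap_inl (σ : (α ⊕ {f : Finset α // f ∈ F}) → ℤ) (e : α) :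
    leviLap F σ (Sum.inl e) =
      ∑ f : {f : Finset α // f ∈ F}, if e ∈ f.1 then σ (Sum.inl e) - σ (Sum.inr f) else 0 := by
  rw [leviLap, Fintype.sum_sum_type]
  simp [leviAdj]

lemma lap_inr (σ : (α ⊕ {f : Finset α // f ∈ F}) → ℤ) (f : {f : Finset α // f ∈ F}) :
    leviLap F σ (Sum.inr f) =
      ∑ x : α, if x ∈ f.1 then σ (Sum.inr f) - σ (Sum.inl x) else 0 := by
  rw [leviLap, Fintype.sum_sum_type]
  simp [leviAdj]

set_option linter.unusedSectionVars false

/-- σ0: fire everything except the flat g once (equivalently, anti-fire g). -/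
lemma sigma0_works (g : {f : Finset α // f ∈ F}) (E : (α ⊕ {f : Finset α // f ∈ F}) → ℤ)
    (hEg : E (Sum.inr g) ≤ g.1.card)
    (hEf : ∀ f : {f : Finset α // f ∈ F}, f ≠ g → E (Sum.inr f) = 0)
    (hEx1 : ∀ x, x ∈ g.1 → E (Sum.inl x) = 0)
    (hEx2 : ∀ x, E (Sum.inl x) ≤ 1) :
    ∀ u, 0 ≤ matroidDivisor F u - E u -
      leviLap F (fun u => if u = Sum.inr g then -1 else 0) u := by
  intro u
  rcases u with x | f
  · rw [lap_inl]
    have hsum : (∑ f : {f : Finset α // f ∈ F},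
        if x ∈ f.1 then (if (Sum.inl x : α ⊕ {f : Finset α // f ∈ F}) = Sum.inr g then -1 else 0)
          - (if (Sum.inr f : α ⊕ {f : Finset α // f ∈ F}) = Sum.inr g then -1 else 0) else 0)
        = ∑ f : {f : Finset α // f ∈ F}, if f = g ∧ x ∈ g.1 then (1:ℤ) else 0 := by
      apply Finset.sum_congr rfl
      intro f _
      rcases eq_or_ne f g with rfl | hfg
      · simp
      · simp [hfg, Sum.inr.injEq]
    rw [hsum]
    have h2 : (∑ f : {f : Finset α // f ∈ F}, if f = g ∧ x ∈ g.1 then (1:ℤ) else 0)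
        = if x ∈ g.1 then 1 else 0 := by
      simp [ite_and, Finset.sum_ite_eq]
    rw [h2]
    by_cases hx : x ∈ g.1
    · simp [hx, matroidDivisor, hEx1 x hx]
    · have := hEx2 x
      simp only [matroidDivisor, Sum.elim_inl, if_neg hx]
      omega
  · rw [lap_inr]
    have hsum : (∑ x : α,
        if x ∈ f.1 then (if (Sum.inr f : α ⊕ {f : Finset α // f ∈ F}) = Sum.inr g then -1 else 0)
          - (if (Sum.inl x : α ⊕ {f : Finset α // f ∈ F}) = Sum.inr g then -1 else 0) else 0)
        = ∑ x : α, if x ∈ f.1 then (if f = g then (-1:ℤ) else 0) else 0 := by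
      apply Finset.sum_congr rfl
      intro x _
      simp [Sum.inr.injEq]
    rw [hsum]
    rcases eq_or_ne f g with rfl | hfg
    · simp [matroidDivisor, Finset.sum_ite_mem]
      omega
    · simp [hfg, matroidDivisor, hEf f hfg]

/-- σpair: anti-fire two disjoint flats g ≠ h, with E = δ_g + δ_h. -/
lemma sigmapair_works (hflat : ∀ f ∈ F, 2 ≤ f.card)
    (g h : {f : Finset α // f ∈ F}) (hgh : g ≠ h)
    (hdisj : ∀ x : α, ¬(x ∈ g.1 ∧ x ∈ h.1)) :
    ∀ u, 0 ≤ matroidDivisor F u -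
      ((if u = Sum.inr g then 1 else 0) + (if u = Sum.inr h then 1 else 0)) -
      leviLap F (fun u => if u = Sum.inr g ∨ u = Sum.inr h then -1 else 0) u := by
  intro u
  rcases u with x | f
  · rw [lap_inl]
    have hsum : (∑ f : {f : Finset α // f ∈ F},
        if x ∈ f.1 then
          (if (Sum.inl x : α ⊕ {f : Finset α // f ∈ F}) = Sum.inr g ∨ (Sum.inl x : α ⊕ {f : Finset α // f ∈ F}) = Sum.inr h then -1 else 0)
          - (if (Sum.inr f : α ⊕ {f : Finset α // f ∈ F}) = Sum.inr g ∨ (Sum.inr f : α ⊕ {f : Finset α // f ∈ F}) = Sum.inr h then -1 else 0) else 0)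
        = ∑ f : {f : Finset α // f ∈ F},
            ((if f = g ∧ x ∈ g.1 then (1:ℤ) else 0) + (if f = h ∧ x ∈ h.1 then (1:ℤ) else 0)) := by
      apply Finset.sum_congr rfl
      intro f _
      rcases eq_or_ne f g with rfl | hfg
      · simp [hgh]
      · rcases eq_or_ne f h with rfl | hfh
        · simp [hfg, Sum.inr.injEq]
        · simp [hfg, hfh, Sum.inr.injEq]
    rw [hsum, Finset.sum_add_distrib]
    have h1 : (∑ f : {f : Finset α // f ∈ F}, if f = g ∧ x ∈ g.1 then (1:ℤ) else 0)
        = if x ∈ g.1 then 1 else 0 := by simp [ite_and, Finset.sum_ite_eq]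
    have h2 : (∑ f : {f : Finset α // f ∈ F}, if f = h ∧ x ∈ h.1 then (1:ℤ) else 0)
        = if x ∈ h.1 then 1 else 0 := by simp [ite_and, Finset.sum_ite_eq]
    rw [h1, h2]
    have := hdisj x
    simp only [matroidDivisor, Sum.elim_inl]
    by_cases hx : x ∈ g.1 <;> by_cases hx' : x ∈ h.1 <;> simp [hx, hx'] at this ⊢
  · rw [lap_inr]
    have hsum : (∑ x : α,
        if x ∈ f.1 then
          (if (Sum.inr f : α ⊕ {f : Finset α // f ∈ F}) = Sum.inr g ∨ (Sum.inr f : α ⊕ {f : Finset α // f ∈ F}) = Sum.inr h then -1 else 0)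
          - (if (Sum.inl x : α ⊕ {f : Finset α // f ∈ F}) = Sum.inr g ∨ (Sum.inl x : α ⊕ {f : Finset α // f ∈ F}) = Sum.inr h then -1 else 0) else 0)
        = ∑ x : α, if x ∈ f.1 then (if f = g ∨ f = h then (-1:ℤ) else 0) else 0 := by
      apply Finset.sum_congr rfl
      intro x _
      simp [Sum.inr.injEq]
    rw [hsum]
    rcases eq_or_ne f g with rfl | hfg
    · have := hflat f.1 f.2
      simp [matroidDivisor, Finset.sum_ite_mem, Ne.symm hgh]
      rw [if_neg hgh]
      omega
    · rcases eq_or_ne f h with rfl | hfh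
      · have := hflat f.1 f.2
        simp [matroidDivisor, Finset.sum_ite_mem, hfg]
        exact Finset.card_pos.1 (by omega)
      · simp [matroidDivisor, hfg, hfh]

/-- The script concentrating chips near an element `e`: anti-fire `e` (with weight `c`)
and all flats through `e`. -/
def sigmaE (c : ℤ) (e : α) : (α ⊕ {f : Finset α // f ∈ F}) → ℤ :=
  Sum.elim (fun x => if x = e then -c else 0) (fun f => if e ∈ f.1 then -1 else 0)

lemma count_pair (hpair : ∀ x y : α, x ≠ y → ∃! f, f ∈ F ∧ x ∈ f ∧ y ∈ f)
    {x e : α} (hxe : x ≠ e) :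
    ∑ f : {f : Finset α // f ∈ F}, (if x ∈ f.1 ∧ e ∈ f.1 then (1:ℤ) else 0) = 1 := by
  obtain ⟨f0, ⟨hf0F, hx0, he0⟩, huniq⟩ := hpair x e hxe
  have h : ∀ f : {f : Finset α // f ∈ F}, (x ∈ f.1 ∧ e ∈ f.1) ↔ f = ⟨f0, hf0F⟩ := by
    intro f
    constructor
    · intro ⟨h1, h2⟩
      exact Subtype.ext (huniq f.1 ⟨f.2, h1, h2⟩)
    · rintro rfl; exact ⟨hx0, he0⟩
  simp only [h]
  simp

lemma lapE_inl_self (c : ℤ) (e : α) :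
    leviLap F (sigmaE F c e) (Sum.inl e) =
      (1 - c) * ∑ f : {f : Finset α // f ∈ F}, (if e ∈ f.1 then (1:ℤ) else 0) := by
  rw [lap_inl, Finset.mul_sum]
  apply Finset.sum_congr rfl
  intro f _
  by_cases hf : e ∈ f.1 <;> simp [sigmaE, hf] <;> ring

lemma lapE_inl_other (hpair : ∀ x y : α, x ≠ y → ∃! f, f ∈ F ∧ x ∈ f ∧ y ∈ f)
    (c : ℤ) {e x : α} (hxe : x ≠ e) :
    leviLap F (sigmaE F c e) (Sum.inl x) = 1 := by
  rw [lap_inl]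
  rw [show (∑ f : {f : Finset α // f ∈ F},
      if x ∈ f.1 then sigmaE F c e (Sum.inl x) - sigmaE F c e (Sum.inr f) else 0)
    = ∑ f : {f : Finset α // f ∈ F}, (if x ∈ f.1 ∧ e ∈ f.1 then (1:ℤ) else 0) from
    Finset.sum_congr rfl fun f _ => by
      by_cases h1 : x ∈ f.1 <;> by_cases h2 : e ∈ f.1 <;> simp [sigmaE, h1, h2, hxe]]
  exact count_pair F hpair hxe

lemma lapE_inr_mem (c : ℤ) {e : α} (f : {f : Finset α // f ∈ F}) (he : e ∈ f.1) :
    leviLap F (sigmaE F c e) (Sum.inr f) = c - f.1.card := by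
  rw [lap_inr]
  rw [show (∑ x : α,
      if x ∈ f.1 then sigmaE F c e (Sum.inr f) - sigmaE F c e (Sum.inl x) else 0)
    = ∑ x : α, ((if x ∈ f.1 then (-1:ℤ) else 0) + (if x = e then c else 0)) from
    Finset.sum_congr rfl fun x _ => by
      by_cases h1 : x ∈ f.1 <;> by_cases h2 : x = e <;>
        simp [sigmaE, h1, h2, he] <;> subst h2 <;> simp_all]
  rw [Finset.sum_add_distrib]
  simp [Finset.sum_ite_mem, Finset.sum_ite_eq]
  ring

lemma lapE_inr_notmem (c : ℤ) {e : α} (f : {f : Finset α // f ∈ F}) (he : e ∉ f.1) :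
    leviLap F (sigmaE F c e) (Sum.inr f) = 0 := by
  rw [lap_inr]
  apply Finset.sum_eq_zero
  intro x _
  by_cases h1 : x ∈ f.1 <;> by_cases h2 : x = e <;> simp [sigmaE, h1, h2, he] <;>
    subst h2 <;> simp_all

lemma sigmaE1_works (hpair : ∀ x y : α, x ≠ y → ∃! f, f ∈ F ∧ x ∈ f ∧ y ∈ f)
    (hflat : ∀ f ∈ F, 2 ≤ f.card) (e : α) (E : (α ⊕ {f : Finset α // f ∈ F}) → ℤ)
    (hE1 : E (Sum.inl e) ≤ 1)
    (hE2 : ∀ x, x ≠ e → E (Sum.inl x) = 0)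
    (hE3 : ∀ f : {f : Finset α // f ∈ F}, e ∈ f.1 → E (Sum.inr f) ≤ 1)
    (hE4 : ∀ f : {f : Finset α // f ∈ F}, e ∉ f.1 → E (Sum.inr f) = 0) :
    ∀ u, 0 ≤ matroidDivisor F u - E u - leviLap F (sigmaE F 1 e) u := by
  intro u
  rcases u with x | f
  · rcases eq_or_ne x e with rfl | hxe
    · rw [lapE_inl_self]
      simp only [matroidDivisor, Sum.elim_inl]
      omega
    · rw [lapE_inl_other F hpair 1 hxe]
      simp [matroidDivisor, hE2 x hxe]
  · by_cases he : e ∈ f.1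
    · rw [lapE_inr_mem F 1 f he]
      have := hflat f.1 f.2
      have := hE3 f he
      simp only [matroidDivisor, Sum.elim_inr]
      omega
    · rw [lapE_inr_notmem F 1 f he]
      simp [matroidDivisor, hE4 f he]

lemma sigmaE2_works (hpair : ∀ x y : α, x ≠ y → ∃! f, f ∈ F ∧ x ∈ f ∧ y ∈ f)
    (hflat : ∀ f ∈ F, 2 ≤ f.card) (e : α)
    (hex : ∃ f0 : {f : Finset α // f ∈ F}, e ∈ f0.1)
    (E : (α ⊕ {f : Finset α // f ∈ F}) → ℤ)
    (hE1 : E (Sum.inl e) ≤ 2)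
    (hE2 : ∀ x, x ≠ e → E (Sum.inl x) = 0)
    (hE3 : ∀ f : {f : Finset α // f ∈ F}, E (Sum.inr f) = 0) :
    ∀ u, 0 ≤ matroidDivisor F u - E u - leviLap F (sigmaE F 2 e) u := by
  intro u
  rcases u with x | f
  · rcases eq_or_ne x e with rfl | hxe
    · rw [lapE_inl_self]
      obtain ⟨f0, hf0⟩ := hex
      have hdeg : (1:ℤ) ≤ ∑ f : {f : Finset α // f ∈ F}, (if x ∈ f.1 then (1:ℤ) else 0) := by
        have := Finset.single_le_sum (f := fun f : {f : Finset α // f ∈ F} =>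
          (if x ∈ f.1 then (1:ℤ) else 0)) (fun f _ => by positivity) (Finset.mem_univ f0)
        simpa [hf0] using this
      simp only [matroidDivisor, Sum.elim_inl]
      omega
    · rw [lapE_inl_other F hpair 2 hxe]
      simp [matroidDivisor, hE2 x hxe]
  · by_cases he : e ∈ f.1
    · rw [lapE_inr_mem F 2 f he]
      have := hflat f.1 f.2
      have := hE3 f
      simp only [matroidDivisor, Sum.elim_inr]
      omega
    · rw [lapE_inr_notmem F 2 f he]
      simp [matroidDivisor, hE3 f]

lemma lap_zero (u : α ⊕ {f : Finset α // f ∈ F}) :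
    leviLap F (fun _ => 0) u = 0 := by
  simp [leviLap]

lemma exists_ge_one' (V : Type*) [Fintype V] (f : V → ℤ) (h : 0 < ∑ v, f v) :
    ∃ v, 1 ≤ f v := by
  by_contra hc
  push_neg at hc
  have : ∑ v, f v ≤ 0 := Finset.sum_nonpos fun v _ => by linarith [hc v]
  omega

lemma eq_single (V : Type*) [Fintype V] [DecidableEq V] (f : V → ℤ) (hn : ∀ v, 0 ≤ f v)
    (h : ∑ v, f v = 1) : ∃ w, f = fun u => if u = w then 1 else 0 := by
  obtain ⟨w, hw⟩ := exists_ge_one' V f (by omega)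
  refine ⟨w, funext fun u => ?_⟩
  have hle : f w ≤ ∑ v, f v := Finset.single_le_sum (fun v _ => hn v) (Finset.mem_univ w)
  have hrest : ∑ v ∈ Finset.univ.erase w, f v = 0 := by
    have := Finset.add_sum_erase Finset.univ f (Finset.mem_univ w)
    omega
  by_cases hu : u = w
  · subst hu; simp; omega
  · simp only [if_neg hu]
    exact (Finset.sum_eq_zero_iff_of_nonneg (fun v _ => hn v)).1 hrest u
      (Finset.mem_erase.2 ⟨hu, Finset.mem_univ u⟩)

lemma eq_pair (V : Type*) [Fintype V] [DecidableEq V] (f : V → ℤ) (hn : ∀ v, 0 ≤ f v)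
    (h : ∑ v, f v = 2) :
    ∃ v w, f = fun u => (if u = v then 1 else 0) + (if u = w then 1 else 0) := by
  obtain ⟨v, hv⟩ := exists_ge_one' V f (by omega)
  set g : V → ℤ := fun u => f u - (if u = v then 1 else 0) with hg
  have hgn : ∀ u, 0 ≤ g u := by
    intro u; simp only [hg]
    rcases eq_or_ne u v with rfl | hne
    · simp; omega
    · simp [hne]; exact hn u
  have hgs : ∑ u, g u = 1 := by
    simp only [hg, Finset.sum_sub_distrib]
    rw [Finset.sum_ite_eq' Finset.univ v (fun _ => (1:ℤ))]
    simp [h]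
  obtain ⟨w, hw⟩ := eq_single V g hgn hgs
  refine ⟨v, w, funext fun u => ?_⟩
  have := congrFun hw u
  simp only [hg] at this
  omega

lemma pairval_le_two {V : Type*} [DecidableEq V] (a b u : V) :
    ((if u = a then (1:ℤ) else 0) + (if u = b then 1 else 0)) ≤ 2 := by
  split <;> split <;> omega


end Aux

/-- For every effective divisor `E` of degree 2 on the Levi graph of a rank 3 simple
matroid, `D_M − E` is linearly equivalent (via chip-firing) to an effective divisor;
i.e. the Baker–Norine rank of `D_M` is at least 2. -/
theorem matroid_divisor_rank_ge_two {α : Type*} [Fintype α] [DecidableEq α]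
    (F : Finset (Finset α))
    (hpair : ∀ x y : α, x ≠ y → ∃! f, f ∈ F ∧ x ∈ f ∧ y ∈ f)
    (hflat : ∀ f ∈ F, 2 ≤ f.card)
    (hbasis : ∃ e₁ e₂ e₃ : α, e₁ ≠ e₂ ∧ e₁ ≠ e₃ ∧ e₂ ≠ e₃ ∧
      ¬∃ f ∈ F, e₁ ∈ f ∧ e₂ ∈ f ∧ e₃ ∈ f)
    (Eff : (α ⊕ {f : Finset α // f ∈ F}) → ℤ)
    (heff : ∀ v, 0 ≤ Eff v)
    (hdeg : ∑ v, Eff v = 2) :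
    ∃ σ : (α ⊕ {f : Finset α // f ∈ F}) → ℤ,
      ∀ v, 0 ≤ matroidDivisor F v - Eff v - leviLap F σ v := by
  -- every element lies on some flat
  have hex : ∀ e : α, ∃ f0 : {f : Finset α // f ∈ F}, e ∈ f0.1 := by
    intro e
    obtain ⟨e₁, e₂, _, h12, _, _, _⟩ := hbasis
    rcases eq_or_ne e e₁ with rfl | hne
    · obtain ⟨f, ⟨hfF, hf1, _⟩, _⟩ := hpair e e₂ h12
      exact ⟨⟨f, hfF⟩, hf1⟩
    · obtain ⟨f, ⟨hfF, hf1, _⟩, _⟩ := hpair e e₁ hne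
      exact ⟨⟨f, hfF⟩, hf1⟩
  obtain ⟨v, w, hEff⟩ := eq_pair _ Eff heff hdeg
  rcases v with e1 | g
  · rcases w with e2 | g
    · -- two chips on elements
      rcases eq_or_ne e1 e2 with rfl | hne
      · -- both on the same element
        refine ⟨sigmaE F 2 e1, sigmaE2_works F hpair hflat e1 (hex e1) Eff ?_ ?_ ?_⟩
        · rw [hEff]; simp
        · intro x hx; rw [hEff]; simp [hx]
        · intro f; rw [hEff]; simp
      · -- two distinct elements: no firing needed
        refine ⟨fun _ => 0, fun u => ?_⟩
        rw [lap_zero, hEff]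
        rcases u with x | f
        · simp only [matroidDivisor, Sum.elim_inl, Sum.inl.injEq]
          rcases eq_or_ne x e1 with rfl | h1
          · simp [hne]
          · simp [h1]
            split <;> omega
        · simp [matroidDivisor]
    · -- one chip on an element, one on a flat
      by_cases he : e1 ∈ g.1
      · refine ⟨sigmaE F 1 e1, sigmaE1_works F hpair hflat e1 Eff ?_ ?_ ?_ ?_⟩
        · rw [hEff]; simp
        · intro x hx; rw [hEff]; simp [hx]
        · intro f _; rw [hEff]; simp; split <;> omega
        · intro f hf; rw [hEff]
          have : f ≠ g := fun h => hf (h ▸ he)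
          simp [this]
      · refine ⟨_, sigma0_works F g Eff ?_ ?_ ?_ ?_⟩
        · simp only [hEff]
          have h2 : (2:ℤ) ≤ (g.1.card : ℤ) := by exact_mod_cast hflat g.1 g.2
          split_ifs <;> omega
        · intro f hf; rw [hEff]; simp [hf]
        · intro x hx; rw [hEff]
          have : x ≠ e1 := fun h => he (h ▸ hx)
          simp [this]
        · intro x; rw [hEff]; simp; split <;> omega
  · rcases w with e2 | h
    · -- one chip on a flat, one on an element (symmetric)
      by_cases he : e2 ∈ g.1
      · refine ⟨sigmaE F 1 e2, sigmaE1_works F hpair hflat e2 Eff ?_ ?_ ?_ ?_⟩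
        · rw [hEff]; simp
        · intro x hx; rw [hEff]; simp [hx]
        · intro f _; rw [hEff]; simp; split <;> omega
        · intro f hf; rw [hEff]
          have : f ≠ g := fun h => hf (h ▸ he)
          simp [this]
      · refine ⟨_, sigma0_works F g Eff ?_ ?_ ?_ ?_⟩
        · simp only [hEff]
          have h2 : (2:ℤ) ≤ (g.1.card : ℤ) := by exact_mod_cast hflat g.1 g.2
          split_ifs <;> omega
        · intro f hf; rw [hEff]; simp [hf]
        · intro x hx; rw [hEff]
          have : x ≠ e2 := fun h => he (h ▸ hx)
          simp [this]
        · intro x; rw [hEff]; simp; split <;> omega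
    · -- two chips on flats
      rcases eq_or_ne g h with rfl | hgh
      · refine ⟨_, sigma0_works F g Eff ?_ ?_ ?_ ?_⟩
        · simp only [hEff]
          have h2 : (2:ℤ) ≤ (g.1.card : ℤ) := by exact_mod_cast hflat g.1 g.2
          split_ifs <;> omega
        · intro f hf; rw [hEff]; simp [hf]
        · intro x _; rw [hEff]; simp
        · intro x; rw [hEff]; simp
      · by_cases hint : ∃ x, x ∈ g.1 ∧ x ∈ h.1
        · obtain ⟨e, heg, heh⟩ := hint
          refine ⟨sigmaE F 1 e, sigmaE1_works F hpair hflat e Eff ?_ ?_ ?_ ?_⟩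
          · rw [hEff]; simp
          · intro x _; rw [hEff]; simp
          · intro f _; rw [hEff]
            rcases eq_or_ne f g with rfl | h1
            · simp [hgh]
            · simp [h1]; split <;> omega
          · intro f hf; rw [hEff]
            have h1 : f ≠ g := fun hq => hf (hq ▸ heg)
            have h2 : f ≠ h := fun hq => hf (hq ▸ heh)
            simp [h1, h2]
        · push_neg at hint
          rw [hEff]
          exact ⟨_, sigmapair_works F hflat g h hgh (fun x hx => hint x hx.1 hx.2)⟩
end

section
/- Let M be a rank 3 simple matroid with basis e_1, e_2, e_3 and let f_{ij} denote the unique flat containing e_i and e_j. Then the divisor D_M − [f_{12}] − [f_{13}] − [f_{23}] on the Levi graph Γ_M is not linearly equivalent to any effective divisor; hence the Baker–Norine rank of D_M is exactly 2. -/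
private lemma lap_lower {α : Type*} [Fintype α] [DecidableEq α] (F : Finset (Finset α))
    (σ : (α ⊕ {f : Finset α // f ∈ F}) → ℤ) (v : α ⊕ {f : Finset α // f ∈ F})
    (hmax : ∀ u, σ u ≤ σ v) (T : Finset (α ⊕ {f : Finset α // f ∈ F}))
    (hT : ∀ u ∈ T, leviAdj F v u = true ∧ σ u + 1 ≤ σ v) :
    (T.card : ℤ) ≤ leviLap F σ v := by
  have h1 : (T.card : ℤ) = ∑ u ∈ T, (1 : ℤ) := by simp
  rw [h1, leviLap]
  refine le_trans (Finset.sum_le_sum ?_)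
    (Finset.sum_le_sum_of_subset_of_nonneg (Finset.subset_univ T) ?_)
  · intro u hu
    obtain ⟨ha, hb⟩ := hT u hu
    simp only [ha, if_true]
    omega
  · intro u _ _
    split
    · have := hmax u; omega
    · exact le_refl 0

/-- If `e₁, e₂, e₃` is a basis of a rank 3 simple matroid `M` and `f_{ij}` is the
unique flat containing `e_i` and `e_j`, then `D_M − [f₁₂] − [f₁₃] − [f₂₃]` is not
linearly equivalent (via chip-firing) to any effective divisor on the Levi graph;
hence the Baker–Norine rank of `D_M` is at most (in fact exactly) 2. -/
theorem matroid_divisor_rank_le_two {α : Type*} [Fintype α] [DecidableEq α]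
    (F : Finset (Finset α))
    (hpair : ∀ x y : α, x ≠ y → ∃! f, f ∈ F ∧ x ∈ f ∧ y ∈ f)
    (hflat : ∀ f ∈ F, 2 ≤ f.card)
    (e₁ e₂ e₃ : α) (h12 : e₁ ≠ e₂) (h13 : e₁ ≠ e₃) (h23 : e₂ ≠ e₃)
    (hbasis : ¬∃ f ∈ F, e₁ ∈ f ∧ e₂ ∈ f ∧ e₃ ∈ f)
    (f₁₂ : {f : Finset α // f ∈ F}) (hf₁₂ : e₁ ∈ f₁₂.1 ∧ e₂ ∈ f₁₂.1)
    (f₁₃ : {f : Finset α // f ∈ F}) (hf₁₃ : e₁ ∈ f₁₃.1 ∧ e₃ ∈ f₁₃.1)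
    (f₂₃ : {f : Finset α // f ∈ F}) (hf₂₃ : e₂ ∈ f₂₃.1 ∧ e₃ ∈ f₂₃.1) :
    ¬∃ σ : (α ⊕ {f : Finset α // f ∈ F}) → ℤ,
      ∀ v, 0 ≤ matroidDivisor F v
        - ((if v = Sum.inr f₁₂ then 1 else 0)
          + (if v = Sum.inr f₁₃ then 1 else 0)
          + (if v = Sum.inr f₂₃ then 1 else 0))
        - leviLap F σ v := by
  rintro ⟨σ, h⟩
  -- the three flats are pairwise distinct
  have hne12_13 : f₁₂ ≠ f₁₃ := by
    intro hEq
    exact hbasis ⟨f₁₂.1, f₁₂.2, hf₁₂.1, hf₁₂.2, by rw [hEq]; exact hf₁₃.2⟩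
  have hne12_23 : f₁₂ ≠ f₂₃ := by
    intro hEq
    exact hbasis ⟨f₁₂.1, f₁₂.2, hf₁₂.1, hf₁₂.2, by rw [hEq]; exact hf₂₃.2⟩
  have hne13_23 : f₁₃ ≠ f₂₃ := by
    intro hEq
    exact hbasis ⟨f₁₃.1, f₁₃.2, hf₁₃.1, by rw [hEq]; exact hf₂₃.1, hf₁₃.2⟩
  -- a vertex of maximal σ-value
  have : Nonempty (α ⊕ {f : Finset α // f ∈ F}) := ⟨Sum.inl e₁⟩
  obtain ⟨v₀, hv₀⟩ := Finite.exists_max σ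
  -- the three marked flats are strictly below the maximum
  have hbad : ∀ g : {f : Finset α // f ∈ F}, (g = f₁₂ ∨ g = f₁₃ ∨ g = f₂₃) →
      σ (Sum.inr g) + 1 ≤ σ v₀ := by
    intro g hg
    by_contra hc
    have hge : σ (Sum.inr g) = σ v₀ := by have := hv₀ (Sum.inr g); omega
    have hmax' : ∀ u, σ u ≤ σ (Sum.inr g) := by rw [hge]; exact hv₀
    have hlow := lap_lower F σ (Sum.inr g) hmax' ∅ (by intro u hu; simp at hu)
    have hcon := h (Sum.inr g)
    simp only [matroidDivisor, Sum.elim_inr] at hcon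
    have hone : (1 : ℤ) ≤ ((if (Sum.inr g : α ⊕ {f : Finset α // f ∈ F}) = Sum.inr f₁₂ then 1 else 0)
          + (if (Sum.inr g : α ⊕ {f : Finset α // f ∈ F}) = Sum.inr f₁₃ then 1 else 0)
          + (if (Sum.inr g : α ⊕ {f : Finset α // f ∈ F}) = Sum.inr f₂₃ then 1 else 0)) := by
      rcases hg with rfl | rfl | rfl <;>
        simp [Sum.inr.injEq, hne12_13, hne12_23, hne13_23, hne12_13.symm, hne12_23.symm,
          hne13_23.symm]
    simp only [Finset.card_empty, Nat.cast_zero] at hlow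
    omega
  -- an element at the max incident to two distinct below-max flats: contradiction
  have helem : ∀ (e : α) (g₁ g₂ : {f : Finset α // f ∈ F}), g₁ ≠ g₂ →
      e ∈ g₁.1 → e ∈ g₂.1 → σ (Sum.inr g₁) + 1 ≤ σ v₀ → σ (Sum.inr g₂) + 1 ≤ σ v₀ →
      σ (Sum.inl e) = σ v₀ → False := by
    intro e g₁ g₂ hne hm1 hm2 hb1 hb2 hm
    have hmax' : ∀ u, σ u ≤ σ (Sum.inl e) := by rw [hm]; exact hv₀
    have hT : ∀ u ∈ ({Sum.inr g₁, Sum.inr g₂} : Finset (α ⊕ {f : Finset α // f ∈ F})),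
        leviAdj F (Sum.inl e) u = true ∧ σ u + 1 ≤ σ (Sum.inl e) := by
      intro u hu
      rcases Finset.mem_insert.mp hu with rfl | hu
      · exact ⟨by simp [leviAdj, hm1], by omega⟩
      · rcases Finset.mem_singleton.mp hu with rfl
        exact ⟨by simp [leviAdj, hm2], by omega⟩
    have hlow := lap_lower F σ (Sum.inl e) hmax' _ hT
    have hcard : ({Sum.inr g₁, Sum.inr g₂} : Finset (α ⊕ {f : Finset α // f ∈ F})).card = 2 :=
      Finset.card_pair (fun hEq => hne (Sum.inr.inj hEq))
    rw [hcard] at hlow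
    have hcon := h (Sum.inl e)
    simp only [matroidDivisor, Sum.elim_inl, reduceCtorEq, if_false] at hcon
    omega
  have h1 : σ (Sum.inl e₁) ≠ σ v₀ := fun hm =>
    helem e₁ f₁₂ f₁₃ hne12_13 hf₁₂.1 hf₁₃.1 (hbad _ (Or.inl rfl)) (hbad _ (Or.inr (Or.inl rfl))) hm
  have h2 : σ (Sum.inl e₂) ≠ σ v₀ := fun hm =>
    helem e₂ f₁₂ f₂₃ hne12_23 hf₁₂.2 hf₂₃.1 (hbad _ (Or.inl rfl)) (hbad _ (Or.inr (Or.inr rfl))) hm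
  have h3 : σ (Sum.inl e₃) ≠ σ v₀ := fun hm =>
    helem e₃ f₁₃ f₂₃ hne13_23 hf₁₃.2 hf₂₃.2 (hbad _ (Or.inr (Or.inl rfl))) (hbad _ (Or.inr (Or.inr rfl))) hm
  -- a flat at the max has all its elements at the max
  have hflatmax : ∀ (g : {f : Finset α // f ∈ F}) (x : α), x ∈ g.1 →
      σ (Sum.inr g) = σ v₀ → σ (Sum.inl x) = σ v₀ := by
    intro g x hx hm
    by_contra hc
    have hx1 : σ (Sum.inl x) + 1 ≤ σ v₀ := by have := hv₀ (Sum.inl x); omega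
    have hmax' : ∀ u, σ u ≤ σ (Sum.inr g) := by rw [hm]; exact hv₀
    have hlow := lap_lower F σ (Sum.inr g) hmax' {Sum.inl x} (by
      intro u hu
      rcases Finset.mem_singleton.mp hu with rfl
      exact ⟨by simp [leviAdj, hx], by omega⟩)
    simp only [Finset.card_singleton, Nat.cast_one] at hlow
    have hcon := h (Sum.inr g)
    simp only [matroidDivisor, Sum.elim_inr] at hcon
    -- g is not one of the marked flats since those are strictly below the max
    have hg12 : g ≠ f₁₂ := fun hEq => by have := hbad g (Or.inl hEq); omega
    have hg13 : g ≠ f₁₃ := fun hEq => by have := hbad g (Or.inr (Or.inl hEq)); omega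
    have hg23 : g ≠ f₂₃ := fun hEq => by have := hbad g (Or.inr (Or.inr hEq)); omega
    simp only [Sum.inr.injEq, hg12, hg13, hg23, if_false] at hcon
    omega
  -- no element is at the max
  have helemmax : ∀ x : α, σ (Sum.inl x) = σ v₀ → False := by
    intro x hm
    by_cases hx1 : x = e₁
    · exact h1 (hx1 ▸ hm)
    by_cases hx2 : x = e₂
    · exact h2 (hx2 ▸ hm)
    by_cases hx3 : x = e₃
    · exact h3 (hx3 ▸ hm)
    obtain ⟨g₁, ⟨hg₁F, hxg₁, he₁g₁⟩, -⟩ := hpair x e₁ hx1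
    obtain ⟨g₂, ⟨hg₂F, hxg₂, he₂g₂⟩, -⟩ := hpair x e₂ hx2
    obtain ⟨g₃, ⟨hg₃F, hxg₃, he₃g₃⟩, -⟩ := hpair x e₃ hx3
    have hup : ∀ (G G' : {f : Finset α // f ∈ F}), G ≠ G' → x ∈ G.1 → x ∈ G'.1 →
        σ (Sum.inr G) = σ v₀ ∨ σ (Sum.inr G') = σ v₀ := by
      intro G G' hne hxG hxG'
      by_contra hc
      push_neg at hc
      have hb1 : σ (Sum.inr G) + 1 ≤ σ v₀ := by have := hv₀ (Sum.inr G); omega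
      have hb2 : σ (Sum.inr G') + 1 ≤ σ v₀ := by have := hv₀ (Sum.inr G'); omega
      exact helem x G G' hne hxG hxG' hb1 hb2 hm
    by_cases hgg : g₁ = g₂
    · have hne13g : g₁ ≠ g₃ := by
        intro hEq
        exact hbasis ⟨g₁, hg₁F, he₁g₁, by rw [hgg]; exact he₂g₂, by rw [hEq]; exact he₃g₃⟩
      rcases hup ⟨g₁, hg₁F⟩ ⟨g₃, hg₃F⟩ (by simp [Subtype.ext_iff, hne13g]) hxg₁ hxg₃ with hA | hB
      · exact h1 (hflatmax _ e₁ he₁g₁ hA)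
      · exact h3 (hflatmax _ e₃ he₃g₃ hB)
    · rcases hup ⟨g₁, hg₁F⟩ ⟨g₂, hg₂F⟩ (by simp [Subtype.ext_iff, hgg]) hxg₁ hxg₂ with hA | hB
      · exact h1 (hflatmax _ e₁ he₁g₁ hA)
      · exact h2 (hflatmax _ e₂ he₂g₂ hB)
  -- conclude by analyzing the max vertex
  obtain x | g := v₀
  · exact helemmax x rfl
  · have hcard := hflat g.1 g.2
    have hnon : g.1.Nonempty := Finset.card_pos.mp (by omega)
    obtain ⟨x, hx⟩ := hnon
    exact helemmax x (hflatmax g x hx rfl)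
end
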